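/- arXiv:2503.17655 — 2 statements merged into one kernel-verified Lean document; each statement's English description precedes it below -/
import Mathlib

section
/- Suppose a graph G has Nagata dimension at most 1 at scale 2 with constant c, and every set of fewer than d vertices is 'correctable', where the family of correctable sets satisfies: (i) any subset of a correctable set is correctable, (ii) a disjoint union of 2-separated correctable sets is correctable, and (iii) V is not the union of two correctable sets. Then some ball of radius 2c in G has at least d vertices. -/
/-- The ball of radius `ρ` around `v` in the shortest-path metric of `G`. -/
noncomputable def gball {V : Type*} (G : SimpleGraph V) (v : V) (ρ : ℝ) : Set V :=
  {u | G.Reachable v u ∧ (G.dist v u : ℝ) ≤ ρ}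

/-- Two vertex sets are `s`-separated if any two vertices, one in each,
are at graph distance at least `s`. -/
def SepSets {V : Type*} (G : SimpleGraph V) (s : ℝ) (A B : Set V) : Prop :=
  ∀ a ∈ A, ∀ b ∈ B, ¬ G.Reachable a b ∨ s ≤ (G.dist a b : ℝ)

/-- A vertex set is `D`-bounded if its vertices are pairwise at distance at most `D`. -/
def BoundedSet {V : Type*} (G : SimpleGraph V) (D : ℝ) (B : Set V) : Prop :=
  ∀ a ∈ B, ∀ b ∈ B, G.Reachable a b ∧ (G.dist a b : ℝ) ≤ D

/-- `G` has Assouad dimension at most `β` at scale `R` with constant `C`: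
for all `0 < r < R`, any ball of radius `R` can be covered by at most
`C * (R/r)^β` balls of radius `r`. -/
def AssouadLE {V : Type*} (G : SimpleGraph V) (β R C : ℝ) : Prop :=
  ∀ r : ℝ, 0 < r → r < R → ∀ v : V, ∃ centers : Finset V,
    (centers.card : ℝ) ≤ C * (R / r) ^ β ∧
    gball G v R ⊆ ⋃ c ∈ centers, gball G c r

/-- `G` has Nagata dimension at most `1` at scale `r` with constant `c`:
two collections of vertex subsets covering `V`, each `r`-separated,
whose members are all `c*r`-bounded. -/
def NagataLE1 {V : Type*} (G : SimpleGraph V) (r c : ℝ) : Prop :=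
  ∃ 𝔅 : Fin 2 → Set (Set V),
    (∀ v : V, ∃ i : Fin 2, ∃ B ∈ 𝔅 i, v ∈ B) ∧
    (∀ i : Fin 2, ∀ B ∈ 𝔅 i, ∀ B' ∈ 𝔅 i, B ≠ B' → SepSets G r B B') ∧
    (∀ i : Fin 2, ∀ B ∈ 𝔅 i, BoundedSet G (c * r) B)

/-- The vertex boundary of `U`: vertices outside `U` adjacent to some vertex of `U`. -/
def vBoundary {V : Type*} (G : SimpleGraph V) (U : Set V) : Set V :=
  {v | v ∉ U ∧ ∃ u ∈ U, G.Adj u v}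

/-- Abstract version: if a graph has Nagata dimension at most `1` at scale `2`
with constant `c`, and a downward-closed "correctability" family contains all
sets of fewer than `d` vertices, is closed under unions of `2`-separated
families, but does not contain two sets covering `V`, then some ball of radius
`2c` has at least `d` vertices. -/
theorem nagata_abstract_distance_bound {V : Type*} [Fintype V] (G : SimpleGraph V)
    (Corr : Set V → Prop) (c : ℝ) (d : ℕ)
    (hNagata : NagataLE1 G 2 c)
    (hsmall : ∀ E : Set V, E.ncard < d → Corr E)
    (hmono : ∀ A B : Set V, A ⊆ B → Corr B → Corr A)
    (hunion : ∀ 𝔄 : Set (Set V), (∀ A ∈ 𝔄, Corr A) →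
      (∀ A ∈ 𝔄, ∀ B ∈ 𝔄, A ≠ B → SepSets G 2 A B) → Corr (⋃₀ 𝔄))
    (hnotall : ¬ ∃ A B : Set V, Corr A ∧ Corr B ∧ A ∪ B = Set.univ) :
    ∃ v : V, d ≤ (gball G v (2 * c)).ncard := by
  by_contra h
  push_neg at h
  obtain ⟨𝔅, hcov, hsep, hbdd⟩ := hNagata
  have hCorrEmpty : Corr (∅ : Set V) := by
    have := hunion ∅ (by simp) (by simp)
    simpa using this
  have hCorrB : ∀ i : Fin 2, ∀ B ∈ 𝔅 i, Corr B := by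
    intro i B hB
    rcases B.eq_empty_or_nonempty with rfl | ⟨v, hv⟩
    · exact hCorrEmpty
    · have hsub : B ⊆ gball G v (2 * c) := by
        intro u hu
        obtain ⟨hr, hd⟩ := hbdd i B hB v hv u hu
        exact ⟨hr, by linarith⟩
      exact hmono _ _ hsub (hsmall _ (h v))
  apply hnotall
  refine ⟨⋃₀ 𝔅 0, ⋃₀ 𝔅 1, hunion _ (hCorrB 0) (hsep 0), hunion _ (hCorrB 1) (hsep 1), ?_⟩
  ext v
  simp only [Set.mem_union, Set.mem_sUnion, Set.mem_univ, iff_true]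
  obtain ⟨i, B, hB, hv⟩ := hcov v
  fin_cases i
  · exact Or.inl ⟨B, hB, hv⟩
  · exact Or.inr ⟨B, hB, hv⟩
end

section
/- Every tree (connected acyclic graph, possibly infinite with bounded degree) has Nagata dimension at most 1 at every scale r with constant c = 3: there exist two collections of vertex subsets covering V, each r-separated and 3r-bounded. -/
/-!
Root the tree and cut it into annuli of width `w = ⌊r⌋` according to the distance `|x|` to the
root. Within the `k`-th annulus, two vertices lie in the same cluster when some walk joins them
without coming closer to the root than `k * w - w / 2`. In a tree, a walk from `a` to `b` staying
at distance `≥ t` from the root forces `d(a, b) ≤ |a| + |b| - 2t`, so clusters have diameter at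
most `3w`. In any graph, a geodesic from `a` to `b` through `z` gives `|a| + |b| ≤ d(a, b) + 2|z|`,
so distinct clusters of one annulus are more than `w` apart, and so are annuli of equal parity.
The clusters in even annuli form one family, those in odd annuli the other. For `r < 1` the
singletons suffice.
-/

theorem Nat.add_add_one_le_of_div_add_two_le {a b w : ℕ} (h : a / w + 2 ≤ b / w) :
    a + w + 1 ≤ b := by
  have hw : 0 < w := Nat.pos_of_ne_zero fun hw => by simp [hw] at h
  have ha := Nat.lt_div_mul_add (a := a) hw
  have hb := Nat.div_mul_le_self b w
  have := Nat.mul_le_mul_right w h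
  rw [add_mul] at this
  omega

theorem nagataLE1_of_le_one {V : Type*} (G : SimpleGraph V) {r c : ℝ} (hr : 0 ≤ r)
    (hr1 : r ≤ 1) (hc : 0 ≤ c) : NagataLE1 G r c := by
  refine ⟨fun _ => Set.range ({·}), fun v => ⟨0, {v}, ⟨v, rfl⟩, rfl⟩, ?_, ?_⟩
  · rintro i _ ⟨u, rfl⟩ _ ⟨v, rfl⟩ hne a rfl b rfl
    refine or_iff_not_imp_left.mpr fun hab => ?_
    have := (not_not.mp hab).pos_dist_of_ne fun h => hne (h ▸ rfl)
    exact hr1.trans (by exact_mod_cast this)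
  · rintro i _ ⟨v, rfl⟩ a rfl b rfl
    simpa using mul_nonneg hc hr

namespace SimpleGraph

variable {V : Type*} {G : SimpleGraph V} {root a b u z : V} {t : ℕ}

def ReachableWithin (G : SimpleGraph V) (S : Set V) (x y : V) : Prop :=
  ∃ W : G.Walk x y, ∀ z ∈ W.support, z ∈ S

namespace ReachableWithin

variable {S : Set V} {x y : V}

theorem refl (hx : x ∈ S) : G.ReachableWithin S x x :=
  ⟨.nil, by simpa using hx⟩

theorem symm : G.ReachableWithin S x y → G.ReachableWithin S y x
  | ⟨W, hW⟩ => ⟨W.reverse, fun z hz => hW z (by simpa using hz)⟩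

theorem trans : G.ReachableWithin S x y → G.ReachableWithin S y z → G.ReachableWithin S x z
  | ⟨W₁, hW₁⟩, ⟨W₂, hW₂⟩ => ⟨W₁.append W₂, fun u hu => by
      rcases (Walk.mem_support_append_iff _ _).mp hu with hu | hu
      exacts [hW₁ u hu, hW₂ u hu]⟩

end ReachableWithin

theorem Walk.dist_add_dist_le_length_add (root : V) (P : G.Walk a b) (hz : z ∈ P.support) :
    G.dist root a + G.dist root b ≤ P.length + 2 * G.dist root z := by
  obtain ⟨p, q, rfl⟩ := Walk.mem_support_iff_exists_append.mp hz
  have ha := p.reverse.reachable.dist_triangle_right root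
  have hb := q.reachable.dist_triangle_right root
  have hpa := dist_le p.reverse
  have hqb := dist_le q
  simp only [Walk.length_append, Walk.length_reverse] at hpa ⊢
  omega

theorem Reachable.exists_dist_add_dist_le_of_not_reachableWithin {S : Set V}
    (hab : G.Reachable a b) (h : ¬ G.ReachableWithin S a b) (root : V) :
    ∃ z ∉ S, G.dist root a + G.dist root b ≤ G.dist a b + 2 * G.dist root z := by
  obtain ⟨P, hP⟩ := hab.exists_walk_length_eq_dist
  obtain ⟨z, hz, hzS⟩ : ∃ z ∈ P.support, z ∉ S := by
    by_contra! hP'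
    exact h ⟨P, hP'⟩
  exact ⟨z, hzS, hP ▸ P.dist_add_dist_le_length_add root hz⟩

theorem IsAcyclic.eq_penultimate_of_adj_of_dist_add_one (hG : G.IsAcyclic) {p : V}
    {P : G.Walk root u} (hP : P.IsPath) (h : G.Adj p u)
    (hd : G.dist root p + 1 = G.dist root u) : p = P.penultimate := by
  classical
  obtain ⟨R, hR, hRl⟩ := (P.reachable.trans h.symm.reachable).exists_path_of_dist
  have hu : u ∉ R.support := fun hu => by
    have := dist_le (R.takeUntil u hu)
    have := R.length_takeUntil_le_length hu
    omega
  exact hG.eq_penultimate_of_adj_end hP h.symm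
    (hG.mem_support_of_ne_mem_support_of_adj_of_isPath hP hR h.symm hu)

theorem IsTree.eq_of_adj_of_dist_add_one (hG : G.IsTree) {p q : V}
    (hp : G.Adj p u) (hq : G.Adj q u) (hdp : G.dist root p + 1 = G.dist root u)
    (hdq : G.dist root q + 1 = G.dist root u) : p = q := by
  obtain ⟨P, hP, -⟩ := (hG.connected root u).exists_path_of_dist
  rw [hG.isAcyclic.eq_penultimate_of_adj_of_dist_add_one hP hp hdp,
    hG.isAcyclic.eq_penultimate_of_adj_of_dist_add_one hP hq hdq]

theorem IsTree.dist_eq_add_length_of_isPath_cons (hG : G.IsTree) (h : G.Adj u a)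
    (P : G.Walk a b) (hP : (Walk.cons h P).IsPath)
    (hup : G.dist root a = G.dist root u + 1) : G.dist root b = G.dist root a + P.length := by
  induction P generalizing u with
  | nil => simp
  | @cons a c b h' Q ih =>
    rw [Walk.cons_isPath_iff] at hP
    rcases hG.dist_eq_dist_add_one_of_adj root h' with hc | hc
    · -- `c` and `u` would both be the parent of `a`, but the path does not revisit `u`
      have hcu : c = u := hG.eq_of_adj_of_dist_add_one h'.symm h hc.symm hup.symm
      subst hcu
      exact absurd (by simp) hP.2
    · have := ih h' hP.1 hc
      rw [Walk.length_cons]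
      omega

theorem IsTree.length_add_two_mul_le_of_isPath (hG : G.IsTree) (P : G.Walk a b) (hP : P.IsPath)
    (hS : ∀ z ∈ P.support, t ≤ G.dist root z) :
    P.length + 2 * t ≤ G.dist root a + G.dist root b := by
  induction P with
  | nil =>
    have := hS _ (Walk.start_mem_support _)
    simp only [Walk.length_nil]
    omega
  | @cons a c b h Q ih =>
    rw [Walk.cons_isPath_iff] at hP
    have hta := hS a (Walk.start_mem_support _)
    rw [Walk.length_cons]
    rcases hG.dist_eq_dist_add_one_of_adj root h with hc | hc
    · have := ih hP.1 fun z hz => hS z (by simp [hz])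
      omega
    · have := hG.dist_eq_add_length_of_isPath_cons h Q (hP.1.cons hP.2) hc
      omega

theorem IsTree.dist_add_two_mul_le_of_reachableWithin (hG : G.IsTree)
    (h : G.ReachableWithin {z | t ≤ G.dist root z} a b) :
    G.dist a b + 2 * t ≤ G.dist root a + G.dist root b := by
  classical
  obtain ⟨W, hW⟩ := h
  have := hG.length_add_two_mul_le_of_isPath W.bypass W.bypass_isPath
    fun z hz => hW z (W.support_bypass_subset_support hz)
  have := dist_le W.bypass
  omega

def annulusCluster (G : SimpleGraph V) (root : V) (w : ℕ) (v : V) : Set V :=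
  {y | G.dist root y / w = G.dist root v / w ∧
    G.ReachableWithin {z | G.dist root v / w * w - w / 2 ≤ G.dist root z} v y}

section annulusCluster

variable {v v' : V} {w : ℕ}

theorem mem_annulusCluster_self : v ∈ G.annulusCluster root w v :=
  ⟨rfl, .refl ((Nat.sub_le _ _).trans (Nat.div_mul_le_self _ _))⟩

theorem annulusCluster_eq (hk : G.dist root v / w = G.dist root v' / w)
    (h : G.ReachableWithin {z | G.dist root v / w * w - w / 2 ≤ G.dist root z} v v') :
    G.annulusCluster root w v = G.annulusCluster root w v' := by
  ext y
  simp only [annulusCluster, Set.mem_ofPred_eq, hk]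
  rw [hk] at h
  exact and_congr_right fun _ => ⟨h.symm.trans, h.trans⟩

theorem add_one_le_dist_of_mem_annulusCluster (hconn : G.Connected)
    (ha : a ∈ G.annulusCluster root w v) (hb : b ∈ G.annulusCluster root w v')
    (hpar : G.dist root v / w % 2 = G.dist root v' / w % 2)
    (hne : G.annulusCluster root w v ≠ G.annulusCluster root w v') : w + 1 ≤ G.dist a b := by
  obtain ⟨hka, hva⟩ := ha
  obtain ⟨hkb, hvb⟩ := hb
  rcases eq_or_ne (G.dist root v / w) (G.dist root v' / w) with hk | hk
  · have hab : ¬ G.ReachableWithin {z | G.dist root v / w * w - w / 2 ≤ G.dist root z} a b :=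
      fun hab => hne (annulusCluster_eq hk (hva.trans (hab.trans (hk ▸ hvb.symm))))
    obtain ⟨z, hz, hdz⟩ := (hconn a b).exists_dist_add_dist_le_of_not_reachableWithin hab root
    simp only [Set.mem_ofPred_eq, not_le] at hz
    have ha := Nat.div_mul_le_self (G.dist root a) w
    have hb := Nat.div_mul_le_self (G.dist root b) w
    rw [hka] at ha
    rw [hkb, ← hk] at hb
    omega
  · have hab : G.dist root b ≤ G.dist root a + G.dist a b := hconn.dist_triangle
    have hba : G.dist root a ≤ G.dist root b + G.dist b a := hconn.dist_triangle
    rw [dist_comm (u := b)] at hba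
    rcases (by omega : G.dist root a / w + 2 ≤ G.dist root b / w ∨
        G.dist root b / w + 2 ≤ G.dist root a / w) with h | h <;>
      have := Nat.add_add_one_le_of_div_add_two_le h <;> omega

theorem IsTree.dist_le_of_mem_annulusCluster (hG : G.IsTree) (hw : 0 < w)
    (ha : a ∈ G.annulusCluster root w v) (hb : b ∈ G.annulusCluster root w v) :
    G.dist a b ≤ 3 * w := by
  obtain ⟨hka, hva⟩ := ha
  obtain ⟨hkb, hvb⟩ := hb
  have := hG.dist_add_two_mul_le_of_reachableWithin (hva.symm.trans hvb)
  have ha := Nat.lt_div_mul_add (a := G.dist root a) hw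
  have hb := Nat.lt_div_mul_add (a := G.dist root b) hw
  rw [hka] at ha
  rw [hkb] at hb
  omega

end annulusCluster

theorem IsTree.nagataLE1 (hG : G.IsTree) {w : ℕ} (hw : 0 < w) {r : ℝ} (hwr : w ≤ r)
    (hrw : r ≤ w + 1) : NagataLE1 G r 3 := by
  obtain ⟨root⟩ := hG.connected.nonempty
  refine ⟨fun i => G.annulusCluster root w '' {v | G.dist root v / w % 2 = i}, fun v => ?_,
    ?_, ?_⟩
  · exact ⟨⟨G.dist root v / w % 2, Nat.mod_lt _ two_pos⟩, _, ⟨v, rfl, rfl⟩,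
      mem_annulusCluster_self⟩
  · rintro i _ ⟨v, hv, rfl⟩ _ ⟨v', hv', rfl⟩ hne a ha b hb
    have := add_one_le_dist_of_mem_annulusCluster hG.connected ha hb (hv.trans hv'.symm) hne
    exact Or.inr (hrw.trans (by exact_mod_cast this))
  · rintro i _ ⟨v, -, rfl⟩ a ha b hb
    have : (G.dist a b : ℝ) ≤ 3 * w := by exact_mod_cast hG.dist_le_of_mem_annulusCluster hw ha hb
    exact ⟨hG.connected a b, by linarith⟩

end SimpleGraph

theorem tree_nagata_dim_le_one_general {V : Type*} (G : SimpleGraph V)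
    (hconn : G.Connected) (hacyclic : G.IsAcyclic) :
    ∀ r : ℝ, 0 < r → NagataLE1 G r 3 := by
  intro r hr
  rcases le_or_gt r 1 with hr1 | hr1
  · exact nagataLE1_of_le_one G hr.le hr1 (by norm_num)
  · exact SimpleGraph.IsTree.nagataLE1 ⟨hconn, hacyclic⟩ (Nat.one_le_floor_iff r |>.mpr hr1.le)
      (Nat.floor_le hr.le) (Nat.lt_floor_add_one r).le

/-- Every tree (connected acyclic graph, possibly infinite with bounded degree)
has Nagata dimension at most `1` at every scale `r > 0` with constant `3`. -/
theorem tree_nagata_dim_le_one {V : Type*} (G : SimpleGraph V)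
    (hconn : G.Connected) (hacyclic : G.IsAcyclic)
    (hdeg : ∃ D : ℕ, ∀ v : V, (G.neighborSet v).Finite ∧ (G.neighborSet v).ncard ≤ D) :
    ∀ r : ℝ, 0 < r → NagataLE1 G r 3 :=
  tree_nagata_dim_le_one_general G hconn hacyclic
end
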